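/- For a Boolean network f of dimension n, a binary configuration x ∈ 𝔹^n is a fixed point of f (i.e., f(x) = x) if and only if the set of configurations in P^n reachable from x under the most permissive semantics is exactly {x}. -/
import Mathlib


inductive PState : Type
  | zero | up | down | one
deriving DecidableEq

def PState.ofBool : Bool → PState
  | false => .zero
  | true  => .one

def PState.isBool (p : PState) : Prop := p = .zero ∨ p = .one

abbrev BN (n : ℕ) := (Fin n → Bool) → Fin n → Bool

def gamma {n : ℕ} (x : Fin n → PState) : Set (Fin n → Bool) :=
  {b | ∀ i (v : Bool), x i = PState.ofBool v → b i = v}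

def mpStep {n : ℕ} (f : BN n) (x y : Fin n → PState) : Prop :=
  ∃ i : Fin n, x i ≠ y i ∧ (∀ j, j ≠ i → x j = y j) ∧
    ((y i = .up ∧ x i ≠ .one ∧ ∃ z ∈ gamma x, f z i = true) ∨
     (y i = .one ∧ x i = .up) ∨
     (y i = .down ∧ x i ≠ .zero ∧ ∃ z ∈ gamma x, f z i = false) ∨
     (y i = .zero ∧ x i = .down))

def mpReachP {n : ℕ} (f : BN n) : (Fin n → PState) → (Fin n → PState) → Prop :=
  Relation.ReflTransGen (mpStep f)

def embed {n : ℕ} (x : Fin n → Bool) : Fin n → PState := fun i => PState.ofBool (x i)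

def mpReach {n : ℕ} (f : BN n) (x : Fin n → Bool) : Set (Fin n → Bool) :=
  {y | mpReachP f (embed x) (embed y)}

def cubeSet {n : ℕ} (h : Fin n → Option Bool) : Set (Fin n → Bool) :=
  {z | ∀ i b, h i = some b → z i = b}

def smaller {n : ℕ} (h h' : Fin n → Option Bool) : Prop :=
  ∀ i b, h' i = some b → h i = some b

def kClosed {n : ℕ} (f : BN n) (K : Finset (Fin n)) (h : Fin n → Option Bool) : Prop :=
  ∀ z ∈ cubeSet h, ∀ i ∈ K, h i = none ∨ h i = some (f z i)

def closedBy {n : ℕ} (f : BN n) (h : Fin n → Option Bool) : Prop :=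
  ∀ z ∈ cubeSet h, f z ∈ cubeSet h

def smallestClosed {n : ℕ} (f : BN n) (x : Fin n → Bool) (h : Fin n → Option Bool) : Prop :=
  x ∈ cubeSet h ∧ closedBy f h ∧
    ∀ h', x ∈ cubeSet h' → closedBy f h' → smaller h h'

def minClosed {n : ℕ} (f : BN n) (h : Fin n → Option Bool) : Prop :=
  closedBy f h ∧ ∀ h', closedBy f h' → smaller h' h → h' = h

def faStep {n : ℕ} (f : BN n) (x y : Fin n → Bool) : Prop :=
  ∃ i : Fin n, x i ≠ y i ∧ (∀ j, j ≠ i → x j = y j) ∧ y i = f x i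

def aStep {n : ℕ} (f : BN n) (x y : Fin n → Bool) : Prop :=
  x ≠ y ∧ ∀ i, x i ≠ y i → y i = f x i

def mnStep {n m : ℕ} (F : (Fin n → Fin (m+1)) → Fin n → ℤ)
    (x y : Fin n → Fin (m+1)) : Prop :=
  x ≠ y ∧ ∀ i, x i ≠ y i → ((y i : ℤ) = (x i : ℤ) + F x i)

def beta {n m : ℕ} (x : Fin n → Fin (m+1)) : Set (Fin n → Bool) :=
  {b | ∀ i, ((x i : ℕ) = 0 → b i = false) ∧ ((x i : ℕ) = m → b i = true)}

def refines {n m : ℕ} (F : (Fin n → Fin (m+1)) → Fin n → ℤ) (f : BN n) : Prop :=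
  ∀ x i, (F x i > 0 → ∃ b ∈ beta x, f b i = true) ∧
         (F x i < 0 → ∃ b ∈ beta x, f b i = false)

def alpha {n m : ℕ} (x : Fin n → Fin (m+1)) : Set (Fin n → PState) :=
  {p | ∀ i, ((x i : ℕ) = 0 ↔ p i = .zero) ∧ ((x i : ℕ) = m ↔ p i = .one)}

def bdStep {n : ℕ} (f : BN n) (L : Finset (Fin n)) (a b : Fin n → PState) : Prop :=
  mpStep f a b ∧ ∃ j, a j ≠ b j ∧ j ∉ L ∧ (a j).isBool ∧ ¬ (b j).isBool

def exhaustive {n : ℕ} (f : BN n) (x : Fin n → Bool) (L : Finset (Fin n))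
    (zhat : Fin n → PState) : Prop :=
  Relation.ReflTransGen (bdStep f L) (embed x) zhat ∧ ∀ z', ¬ bdStep f L zhat z'

lemma ofBool_inj {a b : Bool} (h : PState.ofBool a = PState.ofBool b) : a = b := by
  cases a <;> cases b <;> simp_all [PState.ofBool]

lemma self_mem_gamma_embed {n : ℕ} (x : Fin n → Bool) : x ∈ gamma (embed x) := by
  intro i v h
  exact ofBool_inj h

lemma gamma_embed_eq {n : ℕ} {x z : Fin n → Bool} (h : z ∈ gamma (embed x)) : z = x := by
  funext i
  exact h i (x i) rfl

lemma no_step_of_fixed {n : ℕ} {f : BN n} {x : Fin n → Bool} (hfx : f x = x)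
    (y : Fin n → PState) : ¬ mpStep f (embed x) y := by
  rintro ⟨i, hne, -, hc⟩
  rcases hc with ⟨hy, hno, z, hz, hf⟩ | ⟨hy, he⟩ | ⟨hy, hno, z, hz, hf⟩ | ⟨hy, he⟩
  · have hzx : z = x := gamma_embed_eq hz
    have : x i = true := by rw [hzx, congrFun hfx i] at hf; exact hf
    exact hno (by simp [embed, this, PState.ofBool])
  · cases h : x i <;> simp [embed, h, PState.ofBool] at he
  · have hzx : z = x := gamma_embed_eq hz
    have : x i = false := by rw [hzx, congrFun hfx i] at hf; exact hf
    exact hno (by simp [embed, this, PState.ofBool])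
  · cases h : x i <;> simp [embed, h, PState.ofBool] at he

theorem stmt1 {n : ℕ} (f : BN n) (x : Fin n → Bool) :
    f x = x ↔ {z : Fin n → PState | mpReachP f (embed x) z} = {embed x} := by
  constructor
  · intro hfx
    ext z
    simp only [Set.mem_setOf_eq, Set.mem_singleton_iff]
    constructor
    · intro hr
      rcases Relation.ReflTransGen.cases_head hr with h | ⟨c, hc, -⟩
      · exact h.symm
      · exact absurd hc (no_step_of_fixed hfx c)
    · rintro rfl
      exact Relation.ReflTransGen.refl
  · intro hset
    funext i
    by_contra hne
    set y : Fin n → PState := Function.update (embed x) i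
      (if x i = true then PState.down else PState.up) with hy
    have hstep : mpStep f (embed x) y := by
      refine ⟨i, ?_, ?_, ?_⟩
      · cases h : x i <;> simp [y, embed, h, PState.ofBool]
      · intro j hj; simp [y, Function.update_of_ne hj]
      · cases h : x i with
        | true =>
          refine Or.inr (Or.inr (Or.inl ⟨by simp [y, h], ?_, x, self_mem_gamma_embed x, ?_⟩))
          · simp [embed, h, PState.ofBool]
          · cases h' : f x i
            · rfl
            · exact absurd (h'.trans h.symm) hne
        | false =>
          refine Or.inl ⟨by simp [y, h], ?_, x, self_mem_gamma_embed x, ?_⟩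
          · simp [embed, h, PState.ofBool]
          · cases h' : f x i
            · exact absurd (h'.trans h.symm) hne
            · rfl
    have hmem : y ∈ {z : Fin n → PState | mpReachP f (embed x) z} :=
      Relation.ReflTransGen.single hstep
    rw [hset] at hmem
    have := congrFun hmem i
    cases h : x i <;> simp [y, embed, h, PState.ofBool] at this
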